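/- arXiv:2601.08583 — 6 statements merged into one kernel-verified Lean document; each statement's English description precedes it below -/
import Mathlib

section
/- For integers m ≥ 3, d_1, ..., d_m and positive integers ε_1, ..., ε_{m-2}, set t = ε_1 + ... + ε_{m-2}, d = d_1 + d_2 + 1 − t, τ = d_1² + d_1d_2 + d_2² − t(d_1 + d_2) − Σ_{j=1}^{m-2} ε_j d_{j+2} + Σ_{1≤i<j≤m-2} ε_i ε_j, and τ_max = (d−1)² − d_1(d − d_1 − 1). Then (as rational numbers) τ_max − τ = t(t+1)/2 + (Σ_{j=1}^{m-2} (ε_j² − ε_j))/2 + Σ_{j=1}^{m-2} ε_j (d_{j+2} − d_2). -/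
open Finset

/-! After substituting `D`, the identity is polynomial in `d 1`, `d 2`, `t` and linear in the sums,
except that `τ` involves the pair sum `∑_{i<j} ε i * ε j`; the expansion
`t ^ 2 = ∑ ε j ^ 2 + 2 * ∑_{i<j} ε i * ε j` eliminates it. -/

lemma sq_sum_Icc_one_eq {R : Type*} [CommRing R] (f : ℕ → R) (n : ℕ) :
    (∑ j ∈ Icc 1 n, f j) ^ 2
      = ∑ j ∈ Icc 1 n, f j ^ 2 + 2 * ∑ i ∈ Icc 1 n, ∑ j ∈ Icc (i + 1) n, f i * f j := by
  induction n with
  | zero => simp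
  | succ n ih =>
    have inner : ∀ i ∈ Icc 1 n, ∑ j ∈ Icc (i + 1) (n + 1), f i * f j
        = ∑ j ∈ Icc (i + 1) n, f i * f j + f i * f (n + 1) := fun i hi =>
      sum_Icc_succ_top (by simp only [mem_Icc] at hi; omega) _
    rw [sum_Icc_succ_top (by omega), sum_Icc_succ_top (by omega), sum_Icc_succ_top (by omega),
      sum_congr rfl inner, sum_add_distrib, ← sum_mul,
      Icc_eq_empty_of_lt (Nat.lt_succ_self (n + 1)), sum_empty]
    linear_combination ih

theorem tau_max_minus_tau_general (m : ℕ) (d ε : ℕ → ℤ)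
    (t : ℤ) (ht : t = ∑ j ∈ Icc 1 (m - 2), ε j)
    (D : ℤ) (hD : D = d 1 + d 2 + 1 - t)
    (τ : ℤ)
    (hτ : τ = (d 1) ^ 2 + d 1 * d 2 + (d 2) ^ 2 - t * (d 1 + d 2)
        - ∑ j ∈ Icc 1 (m - 2), ε j * d (j + 2)
        + ∑ i ∈ Icc 1 (m - 2), ∑ j ∈ Icc (i + 1) (m - 2), ε i * ε j)
    (τmax : ℤ) (hτmax : τmax = (D - 1) ^ 2 - d 1 * (D - d 1 - 1)) :
    (τmax : ℚ) - (τ : ℚ) = (t : ℚ) * (t + 1) / 2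
      + (∑ j ∈ Icc 1 (m - 2), ((ε j : ℚ) ^ 2 - (ε j : ℚ))) / 2
      + ∑ j ∈ Icc 1 (m - 2), (ε j : ℚ) * ((d (j + 2) : ℚ) - (d 2 : ℚ)) := by
  have hsq := sq_sum_Icc_one_eq (fun j => (ε j : ℚ)) (m - 2)
  subst hτmax hτ hD ht
  push_cast
  simp only [mul_sub, sum_sub_distrib, ← sum_mul]
  linear_combination (1 / 2 : ℚ) * hsq

/-- Corollary 5.2 (1): the difference between the du Plessis–Wall upper
bound `τ_max` and the Tjurina number `τ` given by Theorem 3.1. -/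
theorem tau_max_minus_tau (m : ℕ) (hm : 3 ≤ m) (d ε : ℕ → ℤ)
    (hε : ∀ j ∈ Icc 1 (m - 2), 0 < ε j)
    (t : ℤ) (ht : t = ∑ j ∈ Icc 1 (m - 2), ε j)
    (D : ℤ) (hD : D = d 1 + d 2 + 1 - t)
    (τ : ℤ)
    (hτ : τ = (d 1) ^ 2 + d 1 * d 2 + (d 2) ^ 2 - t * (d 1 + d 2)
        - ∑ j ∈ Icc 1 (m - 2), ε j * d (j + 2)
        + ∑ i ∈ Icc 1 (m - 2), ∑ j ∈ Icc (i + 1) (m - 2), ε i * ε j)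
    (τmax : ℤ) (hτmax : τmax = (D - 1) ^ 2 - d 1 * (D - d 1 - 1)) :
    (τmax : ℚ) - (τ : ℚ) = (t : ℚ) * (t + 1) / 2
      + (∑ j ∈ Icc 1 (m - 2), ((ε j : ℚ) ^ 2 - (ε j : ℚ))) / 2
      + ∑ j ∈ Icc 1 (m - 2), (ε j : ℚ) * ((d (j + 2) : ℚ) - (d 2 : ℚ)) :=
  tau_max_minus_tau_general m d ε t ht D hD τ hτ τmax hτmax
end

section
/- For integers m ≥ 3, d_1 ≤ d_2 ≤ ... ≤ d_m and positive integers ε_1, ..., ε_{m-2}, set t = ε_1 + ... + ε_{m-2}, d = d_1 + d_2 + 1 − t, τ = d_1² + d_1d_2 + d_2² − t(d_1 + d_2) − Σ_{j=1}^{m-2} ε_j d_{j+2} + Σ_{1≤i<j≤m-2} ε_i ε_j, and τ_max = (d−1)² − d_1(d − d_1 − 1). Then τ_max − τ ≥ t(t+1)/2; in particular τ < τ_max. -/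
/-!
Completing the square turns `2 (τ_max − τ)` into
`t² + ∑ εⱼ² + 2 ∑ εⱼ (d_{j+2} − d₂)`: the cross terms `∑_{i<j} εᵢ εⱼ` of `τ` are exactly the
off-diagonal half of `t² = (∑ εⱼ)²`. The last sum is nonnegative because the exponents are
sorted and the `εⱼ` are positive, and `∑ εⱼ² ≥ ∑ εⱼ = t` holds for any integers.
-/

open Finset

theorem sq_sum_Icc_eq {R : Type*} [CommSemiring R] (f : ℕ → R) (n : ℕ) :
    (∑ j ∈ Icc 1 n, f j) ^ 2
      = ∑ j ∈ Icc 1 n, f j ^ 2 + 2 * ∑ i ∈ Icc 1 n, ∑ j ∈ Icc (i + 1) n, f i * f j := by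
  induction n with
  | zero => simp
  | succ n ih =>
    have hcross : ∀ i ∈ Icc 1 n, ∑ j ∈ Icc (i + 1) (n + 1), f i * f j
        = ∑ j ∈ Icc (i + 1) n, f i * f j + f i * f (n + 1) := fun i hi =>
      sum_Icc_succ_top (by have := (mem_Icc.mp hi).2; omega) _
    have h1 : 1 ≤ n + 1 := by omega
    rw [sum_Icc_succ_top h1, sum_Icc_succ_top h1, sum_Icc_succ_top h1, sum_congr rfl hcross,
      sum_add_distrib, ← sum_mul, Icc_eq_empty_of_lt (Nat.lt_succ_self _), sum_empty, add_sq, ih]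
    ring

theorem two_mul_tau_max_sub_tau (m : ℕ) (d ε : ℕ → ℤ) :
    let t := ∑ j ∈ Icc 1 (m - 2), ε j
    let D := d 1 + d 2 + 1 - t
    let τ := d 1 ^ 2 + d 1 * d 2 + d 2 ^ 2 - t * (d 1 + d 2)
        - ∑ j ∈ Icc 1 (m - 2), ε j * d (j + 2)
        + ∑ i ∈ Icc 1 (m - 2), ∑ j ∈ Icc (i + 1) (m - 2), ε i * ε j
    let τmax := (D - 1) ^ 2 - d 1 * (D - d 1 - 1)
    2 * (τmax - τ) = t ^ 2 + ∑ j ∈ Icc 1 (m - 2), ε j ^ 2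
      + 2 * ∑ j ∈ Icc 1 (m - 2), ε j * (d (j + 2) - d 2) := by
  intro t D τ τmax
  have hsq := sq_sum_Icc_eq ε (m - 2)
  simp only [mul_sub, sum_sub_distrib, ← sum_mul]
  linear_combination hsq

/-- From Corollary 5.2 (1): for sorted exponents `d₁ ≤ ⋯ ≤ d_m`, the du
Plessis–Wall bound satisfies `τ_max − τ ≥ t(t+1)/2`; in particular `τ < τ_max`. -/
theorem tau_lt_tau_max (m : ℕ) (hm : 3 ≤ m) (d ε : ℕ → ℤ)
    (hsort : ∀ i ∈ Icc 1 m, ∀ j ∈ Icc 1 m, i ≤ j → d i ≤ d j)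
    (hε : ∀ j ∈ Icc 1 (m - 2), 0 < ε j)
    (t : ℤ) (ht : t = ∑ j ∈ Icc 1 (m - 2), ε j)
    (D : ℤ) (hD : D = d 1 + d 2 + 1 - t)
    (τ : ℤ)
    (hτ : τ = (d 1) ^ 2 + d 1 * d 2 + (d 2) ^ 2 - t * (d 1 + d 2)
        - ∑ j ∈ Icc 1 (m - 2), ε j * d (j + 2)
        + ∑ i ∈ Icc 1 (m - 2), ∑ j ∈ Icc (i + 1) (m - 2), ε i * ε j)
    (τmax : ℤ) (hτmax : τmax = (D - 1) ^ 2 - d 1 * (D - d 1 - 1)) :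
    (t : ℚ) * (t + 1) / 2 ≤ (τmax : ℚ) - (τ : ℚ) ∧ τ < τmax := by
  have hshift : 0 ≤ ∑ j ∈ Icc 1 (m - 2), ε j * (d (j + 2) - d 2) := by
    refine sum_nonneg fun j hj => mul_nonneg (hε j hj).le (sub_nonneg.mpr ?_)
    have hj' := (mem_Icc.mp hj).2
    exact hsort 2 (mem_Icc.mpr ⟨by omega, by omega⟩) (j + 2) (mem_Icc.mpr ⟨by omega, by omega⟩)
      (by omega)
  have hsq : t ≤ ∑ j ∈ Icc 1 (m - 2), ε j ^ 2 :=
    ht ▸ sum_le_sum fun j _ => Int.le_self_sq (ε j)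
  have ht_pos : 0 < t := ht ▸ sum_pos (fun j hj => hε j hj) ⟨1, mem_Icc.mpr ⟨le_rfl, by omega⟩⟩
  have hgap : t * (t + 1) ≤ (τmax - τ) * 2 := by
    have h := two_mul_tau_max_sub_tau m d ε
    subst ht hD hτ hτmax
    linarith
  constructor
  · rw [div_le_iff₀ two_pos]
    exact_mod_cast hgap
  · nlinarith
end

section
/- For integers m ≥ 3, d_1, ..., d_m and positive integers ε_1, ..., ε_{m-2}, set t = ε_1 + ... + ε_{m-2}, d = d_1 + d_2 + 1 − t, τ = d_1² + d_1d_2 + d_2² − t(d_1 + d_2) − Σ_{j=1}^{m-2} ε_j d_{j+2} + Σ_{1≤i<j≤m-2} ε_i ε_j, and τ'_max = (d−1)² − d_1(d − d_1 − 1) − (2d_1 + 2 − d)(2d_1 + 1 − d)/2. Then (as rational numbers) τ'_max − τ = (t² − (t − (d_2 − d_1))²)/2 + (Σ_{j=1}^{m-2} (ε_j² − ε_j) + (d_2 − d_1))/2 + Σ_{j=1}^{m-2} ε_j (d_{j+2} − d_2). -/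
open Finset

theorem sq_sum_Icc_eq_sum_sq_add_two_mul_sum_lt {R : Type*} [CommSemiring R] (a : ℕ → R)
    (n : ℕ) :
    (∑ j ∈ Icc 1 n, a j) ^ 2 =
      ∑ j ∈ Icc 1 n, a j ^ 2 + 2 * ∑ i ∈ Icc 1 n, ∑ j ∈ Icc (i + 1) n, a i * a j := by
  induction n with
  | zero => simp
  | succ n ih =>
    have extend_inner : ∀ i ∈ Icc 1 n,
        ∑ j ∈ Icc (i + 1) (n + 1), a i * a j =
          ∑ j ∈ Icc (i + 1) n, a i * a j + a i * a (n + 1) :=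
      fun i hi => sum_Icc_succ_top (Nat.succ_le_succ (mem_Icc.mp hi).2) _
    rw [sum_Icc_succ_top (by omega), sum_Icc_succ_top (by omega), sum_Icc_succ_top (by omega),
      sum_congr rfl extend_inner, sum_add_distrib, ← sum_mul,
      Icc_eq_empty_of_lt (Nat.lt_succ_self (n + 1)), sum_empty, add_sq, ih]
    ring

theorem tau_max'_minus_tau_general (m : ℕ) (d ε : ℕ → ℤ)
    (t : ℤ) (ht : t = ∑ j ∈ Icc 1 (m - 2), ε j)
    (D : ℤ) (hD : D = d 1 + d 2 + 1 - t)
    (τ : ℤ)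
    (hτ : τ = (d 1) ^ 2 + d 1 * d 2 + (d 2) ^ 2 - t * (d 1 + d 2)
        - ∑ j ∈ Icc 1 (m - 2), ε j * d (j + 2)
        + ∑ i ∈ Icc 1 (m - 2), ∑ j ∈ Icc (i + 1) (m - 2), ε i * ε j)
    (τmax' : ℚ)
    (hτmax' : τmax' = ((D : ℚ) - 1) ^ 2 - (d 1 : ℚ) * ((D : ℚ) - d 1 - 1)
        - (2 * (d 1 : ℚ) + 2 - D) * (2 * (d 1 : ℚ) + 1 - D) / 2) :
    τmax' - (τ : ℚ) =
      ((t : ℚ) ^ 2 - ((t : ℚ) - ((d 2 : ℚ) - d 1)) ^ 2) / 2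
      + ((∑ j ∈ Icc 1 (m - 2), ((ε j : ℚ) ^ 2 - (ε j : ℚ)))
          + ((d 2 : ℚ) - d 1)) / 2
      + ∑ j ∈ Icc 1 (m - 2), (ε j : ℚ) * ((d (j + 2) : ℚ) - (d 2 : ℚ)) := by
  have ht_cast : (t : ℚ) = ∑ j ∈ Icc 1 (m - 2), (ε j : ℚ) := by exact_mod_cast ht
  have t_sq := sq_sum_Icc_eq_sum_sq_add_two_mul_sum_lt (fun j => (ε j : ℚ)) (m - 2)
  rw [← ht_cast] at t_sq
  subst hτmax' hD hτ
  push_cast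
  simp only [sum_sub_distrib, mul_sub, ← sum_mul, ← ht_cast]
  linear_combination t_sq / 2

/-- Corollary 5.2 (2): the difference between the refined du Plessis–Wall
upper bound `τ'_max` and the Tjurina number `τ` given by Theorem 3.1. -/
theorem tau_max'_minus_tau (m : ℕ) (hm : 3 ≤ m) (d ε : ℕ → ℤ)
    (hε : ∀ j ∈ Icc 1 (m - 2), 0 < ε j)
    (t : ℤ) (ht : t = ∑ j ∈ Icc 1 (m - 2), ε j)
    (D : ℤ) (hD : D = d 1 + d 2 + 1 - t)
    (τ : ℤ)
    (hτ : τ = (d 1) ^ 2 + d 1 * d 2 + (d 2) ^ 2 - t * (d 1 + d 2)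
        - ∑ j ∈ Icc 1 (m - 2), ε j * d (j + 2)
        + ∑ i ∈ Icc 1 (m - 2), ∑ j ∈ Icc (i + 1) (m - 2), ε i * ε j)
    (τmax' : ℚ)
    (hτmax' : τmax' = ((D : ℚ) - 1) ^ 2 - (d 1 : ℚ) * ((D : ℚ) - d 1 - 1)
        - (2 * (d 1 : ℚ) + 2 - D) * (2 * (d 1 : ℚ) + 1 - D) / 2) :
    τmax' - (τ : ℚ) =
      ((t : ℚ) ^ 2 - ((t : ℚ) - ((d 2 : ℚ) - d 1)) ^ 2) / 2
      + ((∑ j ∈ Icc 1 (m - 2), ((ε j : ℚ) ^ 2 - (ε j : ℚ)))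
          + ((d 2 : ℚ) - d 1)) / 2
      + ∑ j ∈ Icc 1 (m - 2), (ε j : ℚ) * ((d (j + 2) : ℚ) - (d 2 : ℚ)) :=
  tau_max'_minus_tau_general m d ε t ht D hD τ hτ τmax' hτmax'
end

section
/- For integers m ≥ 3, d_1 ≤ d_2 ≤ ... ≤ d_m and positive integers ε_1, ..., ε_{m-2}, set t = ε_1 + ... + ε_{m-2}, d = d_1 + d_2 + 1 − t, τ = d_1² + d_1d_2 + d_2² − t(d_1 + d_2) − Σ_{j=1}^{m-2} ε_j d_{j+2} + Σ_{1≤i<j≤m-2} ε_i ε_j, and τ'_max = (d−1)² − d_1(d − d_1 − 1) − (2d_1 + 2 − d)(2d_1 + 1 − d)/2. If 2d_1 ≥ d, then τ ≤ τ'_max. -/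
/-!
Write `e = d₂ - d₁` and `S = ∑ εⱼ d_{j+2}`, `Q = ∑ εⱼ²`. Using `t² = Q + 2 ∑_{i<j} εᵢεⱼ`, one gets
the exact decomposition
`2 (τ'_max - τ) = 2 (S - t d₂) + (Q - t) + e (2t - e + 1)`.
Each term is nonnegative: `d_{j+2} ≥ d₂` and `εⱼ > 0` give `S ≥ t d₂`; integers satisfy
`εⱼ ≤ εⱼ²`; and `2d₁ ≥ d` is exactly `e ≤ t - 1`, while the ordering gives `e ≥ 0`.
-/

open Finset

theorem Finset.sq_sum_Icc {R : Type*} [CommSemiring R] (f : ℕ → R) (a n : ℕ) :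
    (∑ j ∈ Icc a n, f j) ^ 2 =
      ∑ j ∈ Icc a n, f j ^ 2 + 2 * ∑ i ∈ Icc a n, ∑ j ∈ Icc (i + 1) n, f i * f j := by
  induction n with
  | zero => rcases Nat.eq_zero_or_pos a with rfl | ha <;> simp [Icc_eq_empty_of_lt, *]
  | succ n ih =>
    rcases lt_or_ge (n + 1) a with ha | ha
    · simp [Icc_eq_empty_of_lt ha]
    rw [sum_Icc_succ_top ha, sum_Icc_succ_top ha, sum_Icc_succ_top ha,
      Icc_eq_empty_of_lt (Nat.lt_succ_self _), sum_empty]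
    have hinner : ∀ i ∈ Icc a n, ∑ j ∈ Icc (i + 1) (n + 1), f i * f j
        = ∑ j ∈ Icc (i + 1) n, f i * f j + f i * f (n + 1) := fun i hi =>
      sum_Icc_succ_top (by grind) _
    rw [sum_congr rfl hinner, sum_add_distrib, ← sum_mul, add_sq, ih]
    ring

theorem two_mul_tauMax_sub_two_mul_tau {R : Type*} [CommRing R] (d₁ d₂ t S Q P D : R)
    (hD : D = d₁ + d₂ + 1 - t) (hP : t ^ 2 = Q + 2 * P) :
    2 * (D - 1) ^ 2 - 2 * d₁ * (D - d₁ - 1) - (2 * d₁ + 2 - D) * (2 * d₁ + 1 - D)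
        - 2 * (d₁ ^ 2 + d₁ * d₂ + d₂ ^ 2 - t * (d₁ + d₂) - S + P)
      = 2 * (S - t * d₂) + (Q - t) + (d₂ - d₁) * (2 * t - (d₂ - d₁) + 1) := by
  subst hD
  linear_combination hP

/-- The refined du Plessis–Wall bound: if `2d₁ ≥ d` then `τ ≤ τ'_max`. -/
theorem tau_le_tau_max' (m : ℕ) (hm : 3 ≤ m) (d ε : ℕ → ℤ)
    (hsort : ∀ i ∈ Icc 1 m, ∀ j ∈ Icc 1 m, i ≤ j → d i ≤ d j)
    (hε : ∀ j ∈ Icc 1 (m - 2), 0 < ε j)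
    (t : ℤ) (ht : t = ∑ j ∈ Icc 1 (m - 2), ε j)
    (D : ℤ) (hD : D = d 1 + d 2 + 1 - t)
    (τ : ℤ)
    (hτ : τ = (d 1) ^ 2 + d 1 * d 2 + (d 2) ^ 2 - t * (d 1 + d 2)
        - ∑ j ∈ Icc 1 (m - 2), ε j * d (j + 2)
        + ∑ i ∈ Icc 1 (m - 2), ∑ j ∈ Icc (i + 1) (m - 2), ε i * ε j)
    (τmax' : ℚ)
    (hτmax' : τmax' = ((D : ℚ) - 1) ^ 2 - (d 1 : ℚ) * ((D : ℚ) - d 1 - 1)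
        - (2 * (d 1 : ℚ) + 2 - D) * (2 * (d 1 : ℚ) + 1 - D) / 2)
    (h2d1 : D ≤ 2 * d 1) :
    (τ : ℚ) ≤ τmax' := by
  have hd₁₂ : d 1 ≤ d 2 := hsort 1 (by simp; omega) 2 (by simp; omega) (by omega)
  have hS : t * d 2 ≤ ∑ j ∈ Icc 1 (m - 2), ε j * d (j + 2) := by
    rw [ht, sum_mul]
    refine sum_le_sum fun j hj => mul_le_mul_of_nonneg_left ?_ (hε j hj).le
    simp only [mem_Icc] at hj
    exact hsort 2 (by simp; omega) (j + 2) (by simp; omega) (by omega)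
  have hQ : t ≤ ∑ j ∈ Icc 1 (m - 2), ε j ^ 2 := ht ▸ sum_le_sum fun j _ => Int.le_self_sq _
  have he : 0 ≤ (d 2 - d 1) * (2 * t - (d 2 - d 1) + 1) := mul_nonneg (by omega) (by omega)
  have key := two_mul_tauMax_sub_two_mul_tau (d 1) (d 2) t
    (∑ j ∈ Icc 1 (m - 2), ε j * d (j + 2)) (∑ j ∈ Icc 1 (m - 2), ε j ^ 2)
    (∑ i ∈ Icc 1 (m - 2), ∑ j ∈ Icc (i + 1) (m - 2), ε i * ε j) D hD
    (by rw [ht]; exact sq_sum_Icc ε 1 (m - 2))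
  rw [← hτ] at key
  have key' : ((2 * τ : ℤ) : ℚ) ≤ ((2 * (D - 1) ^ 2 - 2 * d 1 * (D - d 1 - 1)
      - (2 * d 1 + 2 - D) * (2 * d 1 + 1 - D) : ℤ) : ℚ) := by
    exact_mod_cast (by linarith : 2 * τ ≤ _)
  push_cast at key'
  rw [hτmax']
  linarith
end

section
/- For integers m ≥ 3, d_1 ≤ d_2 ≤ ... ≤ d_m and positive integers ε_1, ..., ε_{m-2}, set t = ε_1 + ... + ε_{m-2}, d = d_1 + d_2 + 1 − t, τ = d_1² + d_1d_2 + d_2² − t(d_1 + d_2) − Σ_{j=1}^{m-2} ε_j d_{j+2} + Σ_{1≤i<j≤m-2} ε_i ε_j, and τ'_max = (d−1)² − d_1(d − d_1 − 1) − (2d_1 + 2 − d)(2d_1 + 1 − d)/2. Assume 2d_1 ≥ d. Then τ = τ'_max if and only if d_1 = d_2 = ... = d_m and ε_1 = ... = ε_{m-2} = 1; moreover, in that case m = 2d_1 − d + 3. -/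
/-!
Twice the gap `τ'_max − τ` is the sum of `2 ∑ εⱼ (d_{j+2} − d₂)`, `∑ εⱼ (εⱼ − 1)` and
`s (2t − s + 1)` with `s = d₂ − d₁`. For sorted exponents and positive `εⱼ` the first two are
nonnegative, and `2d₁ ≥ d` says exactly `s ≤ t − 1`, which makes the third one nonnegative too.
So `τ = τ'_max` iff all three vanish, i.e. iff all exponents agree with `d₁` and all `εⱼ = 1`;
then `t = m − 2` and `d = 2d₁ + 1 − t` give `m = 2d₁ − d + 3`.
-/

open Finset

theorem sq_sum_Icc_one {R : Type*} [CommRing R] (f : ℕ → R) (n : ℕ) :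
    (∑ i ∈ Icc 1 n, f i) ^ 2 =
      ∑ i ∈ Icc 1 n, f i ^ 2 + 2 * ∑ i ∈ Icc 1 n, ∑ j ∈ Icc (i + 1) n, f i * f j := by
  induction n with
  | zero => simp
  | succ n ih =>
    have hinner : ∑ i ∈ Icc 1 n, ∑ j ∈ Icc (i + 1) (n + 1), f i * f j
        = ∑ i ∈ Icc 1 n, ∑ j ∈ Icc (i + 1) n, f i * f j + (∑ i ∈ Icc 1 n, f i) * f (n + 1) := by
      rw [sum_mul, ← sum_add_distrib]
      refine sum_congr rfl fun i hi => ?_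
      rw [sum_Icc_succ_top (show i + 1 ≤ n + 1 by simp only [mem_Icc] at hi; omega)]
    have h1 : 1 ≤ n + 1 := by omega
    rw [sum_Icc_succ_top h1, sum_Icc_succ_top h1, sum_Icc_succ_top h1, hinner,
      Icc_eq_empty (show ¬n + 1 + 1 ≤ n + 1 by omega), sum_empty]
    linear_combination ih

theorem sum_mul_eq_zero_iff_of_pos {ι R : Type*} [Ring R] [LinearOrder R]
    [IsStrictOrderedRing R] {s : Finset ι} {f g : ι → R} (hf : ∀ i ∈ s, 0 < f i)
    (hg : ∀ i ∈ s, 0 ≤ g i) : ∑ i ∈ s, f i * g i = 0 ↔ ∀ i ∈ s, g i = 0 := by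
  rw [sum_eq_zero_iff_of_nonneg fun i hi => mul_nonneg (hf i hi).le (hg i hi)]
  exact forall₂_congr fun i hi => mul_eq_zero_iff_left (hf i hi).ne'

theorem forall_Icc_one_eq_iff {α : Type*} {m : ℕ} (hm : 2 ≤ m) (d : ℕ → α) :
    (∀ i ∈ Icc 1 m, d i = d 1) ↔ d 2 = d 1 ∧ ∀ j ∈ Icc 1 (m - 2), d (j + 2) = d 2 := by
  constructor
  · intro h
    exact ⟨h 2 (by simp; omega), fun j hj => by
      rw [h (j + 2) (by simp at hj ⊢; omega), h 2 (by simp; omega)]⟩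
  · rintro ⟨h2, h⟩ i hi
    simp only [mem_Icc] at hi
    obtain hi | hi | hi : i = 1 ∨ i = 2 ∨ 3 ≤ i := by omega
    · rw [hi]
    · rw [hi, h2]
    · rw [← h2, ← h (i - 2) (by simp; omega), Nat.sub_add_cancel (by omega)]

/-- Twice `τ'_max − τ`, see `tjurinaGap_eq`. -/
def tjurinaGap (n : ℕ) (d ε : ℕ → ℤ) : ℤ :=
  2 * ∑ j ∈ Icc 1 n, ε j * (d (j + 2) - d 2) + ∑ j ∈ Icc 1 n, ε j * (ε j - 1)
    + (d 2 - d 1) * (2 * ∑ j ∈ Icc 1 n, ε j - (d 2 - d 1) + 1)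

theorem tjurinaGap_eq {n : ℕ} {d ε : ℕ → ℤ} {t D τ : ℤ} (ht : t = ∑ j ∈ Icc 1 n, ε j)
    (hD : D = d 1 + d 2 + 1 - t)
    (hτ : τ = d 1 ^ 2 + d 1 * d 2 + d 2 ^ 2 - t * (d 1 + d 2) - ∑ j ∈ Icc 1 n, ε j * d (j + 2)
      + ∑ i ∈ Icc 1 n, ∑ j ∈ Icc (i + 1) n, ε i * ε j) :
    2 * (D - 1) ^ 2 - 2 * d 1 * (D - d 1 - 1) - (2 * d 1 + 2 - D) * (2 * d 1 + 1 - D) - 2 * τ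
      = tjurinaGap n d ε := by
  have hA : ∑ j ∈ Icc 1 n, ε j * (d (j + 2) - d 2)
      = ∑ j ∈ Icc 1 n, ε j * d (j + 2) - (∑ j ∈ Icc 1 n, ε j) * d 2 := by
    rw [sum_mul, ← sum_sub_distrib]
    simp only [mul_sub]
  have hB : ∑ j ∈ Icc 1 n, ε j * (ε j - 1) = ∑ j ∈ Icc 1 n, ε j ^ 2 - ∑ j ∈ Icc 1 n, ε j := by
    rw [← sum_sub_distrib]
    simp only [mul_sub, mul_one, sq]
  subst ht hD hτ
  rw [tjurinaGap, hA, hB]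
  linear_combination sq_sum_Icc_one ε n
theorem tjurinaGap_eq_zero_iff {m : ℕ} (hm : 2 ≤ m) {d ε : ℕ → ℤ}
    (hsort : ∀ i ∈ Icc 1 m, ∀ j ∈ Icc 1 m, i ≤ j → d i ≤ d j)
    (hε : ∀ j ∈ Icc 1 (m - 2), 0 < ε j) (hs : d 2 - d 1 ≤ ∑ j ∈ Icc 1 (m - 2), ε j - 1) :
    tjurinaGap (m - 2) d ε = 0 ↔
      (∀ i ∈ Icc 1 m, d i = d 1) ∧ ∀ j ∈ Icc 1 (m - 2), ε j = 1 := by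
  have hd_ge : ∀ j ∈ Icc 1 (m - 2), 0 ≤ d (j + 2) - d 2 := fun j hj =>
    sub_nonneg.2 (hsort 2 (by simp; omega) (j + 2) (by simp at hj ⊢; omega) (by omega))
  have hε_ge : ∀ j ∈ Icc 1 (m - 2), 0 ≤ ε j - 1 := fun j hj => by have := hε j hj; omega
  have hd12 : 0 ≤ d 2 - d 1 := sub_nonneg.2 (hsort 1 (by simp; omega) 2 (by simp; omega) (by omega))
  have hA := sum_mul_eq_zero_iff_of_pos hε hd_ge
  have hB := sum_mul_eq_zero_iff_of_pos hε hε_ge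
  have hC : (d 2 - d 1) * (2 * ∑ j ∈ Icc 1 (m - 2), ε j - (d 2 - d 1) + 1) = 0 ↔ d 2 - d 1 = 0 :=
    mul_eq_zero_iff_right (by omega)
  have hA₀ := sum_nonneg fun j hj => mul_nonneg (hε j hj).le (hd_ge j hj)
  have hB₀ := sum_nonneg fun j hj => mul_nonneg (hε j hj).le (hε_ge j hj)
  have hC₀ := mul_nonneg hd12 (by omega : 0 ≤ 2 * ∑ j ∈ Icc 1 (m - 2), ε j - (d 2 - d 1) + 1)
  rw [forall_Icc_one_eq_iff hm]
  simp only [sub_eq_zero] at hA hB hC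
  rw [tjurinaGap, ← hA, ← hB, ← hC]
  omega

/-- Corollary 5.5 (maximal Tjurina curves): `τ = τ'_max` iff all exponents
are equal and all `εⱼ = 1`; moreover, in that case `m = 2d₁ − d + 3`. -/
theorem maximal_Tjurina_characterization (m : ℕ) (hm : 3 ≤ m) (d ε : ℕ → ℤ)
    (hsort : ∀ i ∈ Icc 1 m, ∀ j ∈ Icc 1 m, i ≤ j → d i ≤ d j)
    (hε : ∀ j ∈ Icc 1 (m - 2), 0 < ε j)
    (t : ℤ) (ht : t = ∑ j ∈ Icc 1 (m - 2), ε j)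
    (D : ℤ) (hD : D = d 1 + d 2 + 1 - t)
    (τ : ℤ)
    (hτ : τ = (d 1) ^ 2 + d 1 * d 2 + (d 2) ^ 2 - t * (d 1 + d 2)
        - ∑ j ∈ Icc 1 (m - 2), ε j * d (j + 2)
        + ∑ i ∈ Icc 1 (m - 2), ∑ j ∈ Icc (i + 1) (m - 2), ε i * ε j)
    (τmax' : ℚ)
    (hτmax' : τmax' = ((D : ℚ) - 1) ^ 2 - (d 1 : ℚ) * ((D : ℚ) - d 1 - 1)
        - (2 * (d 1 : ℚ) + 2 - D) * (2 * (d 1 : ℚ) + 1 - D) / 2)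
    (h2d1 : D ≤ 2 * d 1) :
    ((τ : ℚ) = τmax' ↔
      (∀ i ∈ Icc 1 m, d i = d 1) ∧ (∀ j ∈ Icc 1 (m - 2), ε j = 1)) ∧
    ((τ : ℚ) = τmax' → (m : ℤ) = 2 * d 1 - D + 3) := by
  have hmax : (τ : ℚ) = τmax' ↔ tjurinaGap (m - 2) d ε = 0 := by
    rw [← tjurinaGap_eq ht hD hτ, ← @Int.cast_eq_zero ℚ, hτmax']
    push_cast
    constructor <;> intro h <;> linarith
  have hiff := hmax.trans (tjurinaGap_eq_zero_iff (by omega) hsort hε (by omega))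
  refine ⟨hiff, fun h => ?_⟩
  obtain ⟨hd, hε_one⟩ := hiff.1 h
  have ht_card : t = m - 2 := by
    rw [ht, sum_congr rfl hε_one, sum_const, Nat.card_Icc]
    simp only [add_tsub_cancel_right, nsmul_eq_mul, mul_one]
    omega
  have hd2 := hd 2 (by simp; omega)
  omega
end

section
/- For integers m ≥ 3, d_1 ≤ d_2 ≤ ... ≤ d_m and positive integers ε_1, ..., ε_{m-2}, set t = ε_1 + ... + ε_{m-2}, d = d_1 + d_2 + 1 − t, τ = d_1² + d_1d_2 + d_2² − t(d_1 + d_2) − Σ_{j=1}^{m-2} ε_j d_{j+2} + Σ_{1≤i<j≤m-2} ε_i ε_j, and τ_max = (d−1)² − d_1(d − d_1 − 1). Then τ_max − τ = 1 if and only if m = 3, ε_1 = 1 and d_2 = d_3. -/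
/-!
Writing `e j = d (j + 2) - d 2 ≥ 0` and expanding `t² = ∑ ε j ² + 2 ∑_{i<j} ε i ε j`, the defect
`τ_max - τ` becomes `∑ j, (ε j ² + ε j e j) + ∑_{i<j} ε i ε j`. Every summand of the first sum is
at least `1` and the second sum is nonnegative, so the defect is at least the number `m - 2` of
summands, and it equals `1` exactly when there is a single summand `ε 1 ² + ε 1 e 1 = 1`.
-/

open Finset

theorem sum_sq_add_mul_add_sum_mul_eq_one_iff {n : ℕ} {ε e : ℕ → ℤ}
    (hε : ∀ j ∈ Icc 1 n, 0 < ε j) (he : ∀ j ∈ Icc 1 n, 0 ≤ e j) :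
    ∑ j ∈ Icc 1 n, (ε j ^ 2 + ε j * e j) + ∑ i ∈ Icc 1 n, ∑ j ∈ Icc (i + 1) n, ε i * ε j = 1 ↔
      n = 1 ∧ ε 1 = 1 ∧ e 1 = 0 := by
  have hpairs : 0 ≤ ∑ i ∈ Icc 1 n, ∑ j ∈ Icc (i + 1) n, ε i * ε j := by
    refine sum_nonneg fun i hi => sum_nonneg fun j hj => ?_
    simp only [mem_Icc] at hi hj
    exact (mul_pos (hε i (by simpa using hi)) (hε j (by simp; omega))).le
  have hcard : (n : ℤ) ≤ ∑ j ∈ Icc 1 n, (ε j ^ 2 + ε j * e j) := by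
    have hone : ∀ j ∈ Icc 1 n, 1 ≤ ε j ^ 2 + ε j * e j := fun j hj => by
      nlinarith [hε j hj, he j hj]
    simpa using card_nsmul_le_sum _ _ 1 hone
  constructor
  · intro h
    have hn0 : n ≠ 0 := by
      rintro rfl
      simp at h
    have hn1 : (n : ℤ) ≤ 1 := by linarith
    obtain rfl : n = 1 := by omega
    have hε1 := hε 1 (by simp)
    have he1 := he 1 (by simp)
    simp only [Icc_self, sum_singleton, Nat.reduceAdd, Icc_eq_empty_of_lt one_lt_two, sum_empty,
      add_zero] at h
    have hε1_eq : ε 1 = 1 := by nlinarith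
    exact ⟨rfl, hε1_eq, by simpa [hε1_eq] using h⟩
  · rintro ⟨rfl, hε1, he1⟩
    simp [hε1, he1]

theorem nearly_free_characterization_general (m : ℕ) (d ε : ℕ → ℤ)
    (hsort : ∀ i ∈ Icc 1 m, ∀ j ∈ Icc 1 m, i ≤ j → d i ≤ d j)
    (hε : ∀ j ∈ Icc 1 (m - 2), 0 < ε j)
    (t : ℤ) (ht : t = ∑ j ∈ Icc 1 (m - 2), ε j)
    (D : ℤ) (hD : D = d 1 + d 2 + 1 - t)
    (τ : ℤ)
    (hτ : τ = (d 1) ^ 2 + d 1 * d 2 + (d 2) ^ 2 - t * (d 1 + d 2)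
        - ∑ j ∈ Icc 1 (m - 2), ε j * d (j + 2)
        + ∑ i ∈ Icc 1 (m - 2), ∑ j ∈ Icc (i + 1) (m - 2), ε i * ε j)
    (τmax : ℤ) (hτmax : τmax = (D - 1) ^ 2 - d 1 * (D - d 1 - 1)) :
    τmax - τ = 1 ↔ m = 3 ∧ ε 1 = 1 ∧ d 2 = d 3 := by
  have hgap : τmax - τ = ∑ j ∈ Icc 1 (m - 2), (ε j ^ 2 + ε j * (d (j + 2) - d 2))
      + ∑ i ∈ Icc 1 (m - 2), ∑ j ∈ Icc (i + 1) (m - 2), ε i * ε j := by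
    simp only [mul_sub, sum_add_distrib, sum_sub_distrib, ← sum_mul]
    subst hτmax hτ hD ht
    linear_combination sq_sum_Icc_eq ε (m - 2)
  have hsorted : ∀ j ∈ Icc 1 (m - 2), 0 ≤ d (j + 2) - d 2 := fun j hj => by
    simp only [mem_Icc] at hj
    exact sub_nonneg.2 (hsort 2 (by simp; omega) (j + 2) (by simp; omega) (by omega))
  rw [hgap, sum_sq_add_mul_add_sum_mul_eq_one_iff hε hsorted, sub_eq_zero, eq_comm (a := d 2)]
  exact and_congr (by omega) Iff.rfl

/-- Corollary 5.4 (1) (nearly free curves): `τ_max − τ = 1` iff `m = 3`,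
`ε₁ = 1` and `d₂ = d₃`. -/
theorem nearly_free_characterization (m : ℕ) (hm : 3 ≤ m) (d ε : ℕ → ℤ)
    (hsort : ∀ i ∈ Icc 1 m, ∀ j ∈ Icc 1 m, i ≤ j → d i ≤ d j)
    (hε : ∀ j ∈ Icc 1 (m - 2), 0 < ε j)
    (t : ℤ) (ht : t = ∑ j ∈ Icc 1 (m - 2), ε j)
    (D : ℤ) (hD : D = d 1 + d 2 + 1 - t)
    (τ : ℤ)
    (hτ : τ = (d 1) ^ 2 + d 1 * d 2 + (d 2) ^ 2 - t * (d 1 + d 2)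
        - ∑ j ∈ Icc 1 (m - 2), ε j * d (j + 2)
        + ∑ i ∈ Icc 1 (m - 2), ∑ j ∈ Icc (i + 1) (m - 2), ε i * ε j)
    (τmax : ℤ) (hτmax : τmax = (D - 1) ^ 2 - d 1 * (D - d 1 - 1)) :
    τmax - τ = 1 ↔ m = 3 ∧ ε 1 = 1 ∧ d 2 = d 3 :=
  nearly_free_characterization_general m d ε hsort hε t ht D hD τ hτ τmax hτmax
end
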